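/- arXiv:1703.09731 — 6 statements merged into one kernel-verified Lean document; each statement's English description precedes it below -/
import Mathlib

section
/- Let q ∈ (0,1] and define f : ℝ → ℝ by f(z) = (1-q)z + (q/2)(1 + z²) (the probability generating function of the offspring law which with probability 1-q produces exactly one offspring and with probability q performs critical binary branching, i.e. 0 or 2 offspring with probability 1/2 each). Let s_n := 1 - f^{[n]}(0), where f^{[n]} denotes the n-fold iterate of f (so s_n is the probability that the corresponding Galton–Watson process started from one particle survives to generation n). Then lim_{n→∞} n·s_n = 2/q; equivalently, the survival probability up to time n is asymptotic to 2/(qn) as n → ∞. -/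
/-!
With `c = q / 2`, the survival probabilities obey the logistic-type recursion
`s (n + 1) = s n - c * s n ^ 2`, so they decrease to `0`. Passing to reciprocals,
`1 / s (n + 1) - 1 / s n = c / (1 - c * s n) → c`, and by Cesàro `1 / s n ∼ c n`,
i.e. `n * s n → 1 / c = 2 / q`.
-/

open Filter Topology

theorem tendsto_div_natCast_of_tendsto_sub {u : ℕ → ℝ} {l : ℝ}
    (h : Tendsto (fun n => u (n + 1) - u n) atTop (𝓝 l)) :
    Tendsto (fun n : ℕ => u n / n) atTop (𝓝 l) := by
  have hmean : Tendsto (fun n : ℕ => (u n - u 0) / n) atTop (𝓝 l) := by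
    refine h.cesaro.congr fun n => ?_
    rw [Finset.sum_range_sub u n, div_eq_inv_mul]
  have hinit : Tendsto (fun n : ℕ => u 0 / n) atTop (𝓝 0) :=
    tendsto_const_div_atTop_nhds_zero_nat (u 0)
  simpa [sub_div] using hmean.add hinit

namespace QuadraticDecay

variable {c : ℝ} {s : ℕ → ℝ}

theorem mem_Ioc (hrec : ∀ n, s (n + 1) = s n - c * s n ^ 2) (hc : 0 ≤ c)
    (hs0 : 0 < s 0) (hcs0 : c * s 0 < 1) (n : ℕ) : s n ∈ Set.Ioc 0 (s 0) := by
  induction n with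
  | zero => exact ⟨hs0, le_rfl⟩
  | succ n ih =>
    obtain ⟨hpos, hle⟩ := ih
    have hfac : s (n + 1) = s n * (1 - c * s n) := by rw [hrec]; ring
    have hcs : c * s n < 1 := lt_of_le_of_lt (by gcongr) hcs0
    constructor
    · rw [hfac]; exact mul_pos hpos (by linarith)
    · nlinarith [hrec n]

theorem antitone (hrec : ∀ n, s (n + 1) = s n - c * s n ^ 2) (hc : 0 ≤ c) : Antitone s :=
  antitone_nat_of_succ_le fun n => by nlinarith [hrec n, sq_nonneg (s n)]

theorem tendsto_zero (hrec : ∀ n, s (n + 1) = s n - c * s n ^ 2) (hc : 0 < c)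
    (hs0 : 0 < s 0) (hcs0 : c * s 0 < 1) : Tendsto s atTop (𝓝 0) := by
  have hpos n := (mem_Ioc hrec hc.le hs0 hcs0 n).1
  have hlim : Tendsto s atTop (𝓝 (⨅ n, s n)) :=
    tendsto_atTop_ciInf (antitone hrec hc.le) ⟨0, by rintro _ ⟨n, rfl⟩; exact (hpos n).le⟩
  set L := ⨅ n, s n
  have hfixed : L = L - c * L ^ 2 := by
    refine tendsto_nhds_unique (hlim.comp (tendsto_add_atTop_nat 1)) ?_
    exact (hlim.sub ((hlim.pow 2).const_mul c)).congr fun n => (hrec n).symm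
  have hL : L = 0 := by
    have : c * L ^ 2 = 0 := by linarith
    simpa [hc.ne'] using this
  rwa [hL] at hlim

theorem inv_succ_sub_inv (hrec : ∀ n, s (n + 1) = s n - c * s n ^ 2) (hc : 0 ≤ c)
    (hs0 : 0 < s 0) (hcs0 : c * s 0 < 1) (n : ℕ) :
    1 / s (n + 1) - 1 / s n = c / (1 - c * s n) := by
  obtain ⟨hpos, hle⟩ := mem_Ioc hrec hc hs0 hcs0 n
  have hcs : 1 - c * s n ≠ 0 := by nlinarith
  rw [show s (n + 1) = s n * (1 - c * s n) by rw [hrec]; ring,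
    div_sub_div _ _ (mul_ne_zero hpos.ne' hcs) hpos.ne', div_eq_div_iff (by positivity) hcs]
  ring

theorem tendsto_inv_div_natCast (hrec : ∀ n, s (n + 1) = s n - c * s n ^ 2) (hc : 0 < c)
    (hs0 : 0 < s 0) (hcs0 : c * s 0 < 1) :
    Tendsto (fun n : ℕ => 1 / s n / n) atTop (𝓝 c) := by
  refine tendsto_div_natCast_of_tendsto_sub ?_
  have hlim : Tendsto (fun n => c / (1 - c * s n)) atTop (𝓝 (c / (1 - c * 0))) :=
    tendsto_const_nhds.div (tendsto_const_nhds.sub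
      ((tendsto_zero hrec hc hs0 hcs0).const_mul c)) (by simp)
  simpa [← inv_succ_sub_inv hrec hc.le hs0 hcs0] using hlim

theorem tendsto_natCast_mul (hrec : ∀ n, s (n + 1) = s n - c * s n ^ 2) (hc : 0 < c)
    (hs0 : 0 < s 0) (hcs0 : c * s 0 < 1) :
    Tendsto (fun n : ℕ => (n : ℝ) * s n) atTop (𝓝 c⁻¹) := by
  refine ((tendsto_inv_div_natCast hrec hc hs0 hcs0).inv₀ hc.ne').congr fun n => ?_
  simp [mul_comm]

end QuadraticDecay

/-- Non-spatial toy model, critical case: branching occurs with probability `q`, and then it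
is critical binary; the survival probability up to generation `n` is asymptotic to `2/(q n)`. -/
theorem toy_model_critical_survival (q : ℝ) (hq0 : 0 < q) (hq1 : q ≤ 1)
    (f : ℝ → ℝ) (hf : ∀ z, f z = (1 - q) * z + (q / 2) * (1 + z ^ 2))
    (s : ℕ → ℝ) (hs : ∀ n, s n = 1 - f^[n] 0) :
    Tendsto (fun n : ℕ => (n : ℝ) * s n) atTop (nhds (2 / q)) := by
  have hrec n : s (n + 1) = s n - q / 2 * s n ^ 2 := by
    rw [hs, hs, Function.iterate_succ_apply', hf]
    ring
  have hs0 : s 0 = 1 := by simp [hs]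
  have hlim := QuadraticDecay.tendsto_natCast_mul hrec (by positivity) (by rw [hs0]; norm_num)
    (by rw [hs0]; linarith)
  rwa [inv_div] at hlim
end

section
/- Let c > 0 and let (s_n)_{n≥0} be a real sequence with s_0 ∈ (0, 1/c) and s_{n+1} = s_n - c·s_n² for all n ≥ 0. Then s_n ∈ (0, 1/c) for all n, s_n is strictly decreasing, and lim_{n→∞} n·s_n = 1/c. -/
/-!
Write `u n = 1 / s n`. The recursion gives `u (n + 1) - u n = c / (1 - c s n)`, an increment that
is at least `c`, so `u n → ∞` and `s n → 0`; the increments then tend to `c`, and by Cesàro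
`u n / n → c`, i.e. `n s n → 1 / c`.
-/

open Filter Topology

theorem Filter.Tendsto.inv_natCast_smul_of_tendsto_sub {E : Type*} [NormedAddCommGroup E]
    [NormedSpace ℝ E] {u : ℕ → E} {l : E}
    (h : Tendsto (fun n => u (n + 1) - u n) atTop (𝓝 l)) :
    Tendsto (fun n : ℕ => (n⁻¹ : ℝ) • u n) atTop (𝓝 l) := by
  have hinit : Tendsto (fun n : ℕ => (n⁻¹ : ℝ) • u 0) atTop (𝓝 0) := by
    simpa using (tendsto_inv_atTop_nhds_zero_nat (𝕜 := ℝ)).smul_const (u 0)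
  refine (zero_add l ▸ hinit.add h.cesaro_smul).congr fun n => ?_
  rw [← smul_add, ← Finset.eq_sum_range_sub]

theorem tendsto_atTop_of_le_sub_succ {u : ℕ → ℝ} {c : ℝ} (hc : 0 < c)
    (h : ∀ n, c ≤ u (n + 1) - u n) : Tendsto u atTop atTop := by
  have hlin : ∀ n : ℕ, u 0 + n * c ≤ u n := by
    intro n
    induction n with
    | zero => simp
    | succ n ih => push_cast; linarith [h n]
  exact tendsto_atTop_mono hlin
    (tendsto_atTop_add_const_left _ _ (tendsto_natCast_atTop_atTop.atTop_mul_const hc))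

theorem sub_mul_sq_mem_Ioo {c x : ℝ} (hc : 0 < c) (hx : x ∈ Set.Ioo 0 (1 / c)) :
    x - c * x ^ 2 ∈ Set.Ioo 0 x := by
  obtain ⟨hx0, hxc⟩ := hx
  have hcx : c * x < 1 := by rwa [lt_div_iff₀' hc] at hxc
  constructor
  · nlinarith [mul_pos hx0 (sub_pos.2 hcx)]
  · nlinarith [mul_pos hc (pow_pos hx0 2)]

theorem one_div_sub_mul_sq {c x : ℝ} (hx : x ≠ 0) (hcx : 1 - c * x ≠ 0) :
    1 / (x - c * x ^ 2) = 1 / x + c / (1 - c * x) := by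
  rw [show x - c * x ^ 2 = x * (1 - c * x) by ring, div_add_div _ _ hx hcx]
  congr 1
  ring

section QuadraticRecursion

variable {c : ℝ} {s : ℕ → ℝ}

theorem mem_Ioo_of_quadratic_rec (hc : 0 < c) (hs0 : s 0 ∈ Set.Ioo 0 (1 / c))
    (hrec : ∀ n, s (n + 1) = s n - c * s n ^ 2) (n : ℕ) : s n ∈ Set.Ioo 0 (1 / c) := by
  induction n with
  | zero => exact hs0
  | succ n ih =>
    obtain ⟨hpos, hlt⟩ := hrec n ▸ sub_mul_sq_mem_Ioo hc ih
    exact ⟨hpos, hlt.trans ih.2⟩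

theorem strictAnti_of_quadratic_rec (hc : 0 < c) (hs : ∀ n, s n ∈ Set.Ioo 0 (1 / c))
    (hrec : ∀ n, s (n + 1) = s n - c * s n ^ 2) : StrictAnti s :=
  strictAnti_nat_of_succ_lt fun n => hrec n ▸ (sub_mul_sq_mem_Ioo hc (hs n)).2

theorem one_div_succ_sub_of_quadratic_rec (hc : 0 < c) (hs : ∀ n, s n ∈ Set.Ioo 0 (1 / c))
    (hrec : ∀ n, s (n + 1) = s n - c * s n ^ 2) (n : ℕ) :
    1 / s (n + 1) - 1 / s n = c / (1 - c * s n) := by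
  have hcs : c * s n < 1 := by rw [← lt_div_iff₀' hc]; exact (hs n).2
  rw [hrec n, one_div_sub_mul_sq (hs n).1.ne' (by linarith)]
  ring

theorem tendsto_zero_of_quadratic_rec (hc : 0 < c) (hs : ∀ n, s n ∈ Set.Ioo 0 (1 / c))
    (hrec : ∀ n, s (n + 1) = s n - c * s n ^ 2) : Tendsto s atTop (𝓝 0) := by
  have hstep : ∀ n, c ≤ 1 / s (n + 1) - 1 / s n := fun n => by
    rw [one_div_succ_sub_of_quadratic_rec hc hs hrec]
    have hcs : 0 < 1 - c * s n := by rw [sub_pos, ← lt_div_iff₀' hc]; exact (hs n).2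
    rw [le_div_iff₀ hcs]
    nlinarith [mul_pos (mul_pos hc hc) (hs n).1]
  simpa [Function.comp_def] using
    tendsto_inv_atTop_zero.comp (tendsto_atTop_of_le_sub_succ (u := fun n => 1 / s n) hc hstep)

end QuadraticRecursion

/-- Analytic core of the critical survival asymptotics: if `s₀ ∈ (0, 1/c)` and
`s_{n+1} = s_n - c s_n²`, then `s_n` stays in `(0,1/c)`, is strictly decreasing, and
`n · s_n → 1/c`. -/
theorem quadratic_recursion_asymptotics (c : ℝ) (hc : 0 < c) (s : ℕ → ℝ)
    (hs0 : s 0 ∈ Set.Ioo 0 (1 / c))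
    (hrec : ∀ n : ℕ, s (n + 1) = s n - c * (s n) ^ 2) :
    (∀ n : ℕ, s n ∈ Set.Ioo 0 (1 / c)) ∧ StrictAnti s ∧
      Tendsto (fun n : ℕ => (n : ℝ) * s n) atTop (nhds (1 / c)) := by
  have hs := mem_Ioo_of_quadratic_rec hc hs0 hrec
  have hincr : Tendsto (fun n => 1 / s (n + 1) - 1 / s n) atTop (𝓝 c) := by
    simp_rw [one_div_succ_sub_of_quadratic_rec hc hs hrec]
    have hden : Tendsto (fun n => 1 - c * s n) atTop (𝓝 1) := by
      simpa using tendsto_const_nhds.sub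
        (tendsto_const_nhds.mul (tendsto_zero_of_quadratic_rec hc hs hrec))
    have := (tendsto_const_nhds (x := c)).div hden one_ne_zero
    rwa [div_one] at this
  have havg := (hincr.inv_natCast_smul_of_tendsto_sub (u := fun n => 1 / s n)).inv₀ hc.ne'
  refine ⟨hs, strictAnti_of_quadratic_rec hc hs hrec, ?_⟩
  simpa [mul_comm] using havg
end

section
/- (Kolmogorov's critical survival asymptotics.) Let (p_k)_{k≥0} be a probability distribution on the nonnegative integers (p_k ≥ 0 for all k, Σ_{k≥0} p_k = 1) with mean Σ_{k≥0} k·p_k = 1, with p_1 < 1, and with finite second factorial moment σ² := Σ_{k≥0} k(k-1)·p_k < ∞. Let φ(z) = Σ_{k≥0} p_k z^k be its probability generating function. Then σ² > 0 and lim_{n→∞} n·(1 - φ^{[n]}(0)) = 2/σ²; i.e., the survival probability of the critical Galton–Watson process up to generation n is asymptotic to 2/(n·φ''(1)). -/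
/-!
Write `u n = 1 - φ^[n] 0`. Because the mean is one, `φ x = x + (1 - x) ^ 2 * H x` with
`H x = ∑ p k ∑_{i<k} ∑_{j<i} x ^ j`; the M-test against `k (k - 1) p k / 2` makes `H` continuous
on `[0, 1]` with `H 1 = σ² / 2`, and `H ≥ p m > 0` for some `m ≥ 2`. Thus
`u (n + 1) = u n - u n ^ 2 * H (1 - u n)`, i.e. `1 / u (n + 1) - 1 / u n = H / (1 - u n * H)`.
This increment is at least `p m`, which forces `u n → 0`; it then tends to `σ² / 2`, and
Cesàro averaging gives `1 / (n u n) → σ² / 2`.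
-/

open Filter Topology Finset

def doubleGeomSum (k : ℕ) (x : ℝ) : ℝ := ∑ i ∈ range k, ∑ j ∈ range i, x ^ j

lemma pow_sub_one_add_mul_eq_sq_mul_doubleGeomSum (k : ℕ) (x : ℝ) :
    x ^ k - 1 + k * (1 - x) = (1 - x) ^ 2 * doubleGeomSum k x := by
  induction k with
  | zero => simp [doubleGeomSum]
  | succ k ih =>
    have hgeom := geom_sum_mul x k
    simp only [doubleGeomSum, sum_range_succ] at ih ⊢
    push_cast
    linear_combination ih + (1 - x) * hgeom

lemma doubleGeomSum_nonneg (k : ℕ) {x : ℝ} (hx : 0 ≤ x) : 0 ≤ doubleGeomSum k x := by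
  unfold doubleGeomSum; positivity

lemma doubleGeomSum_one (k : ℕ) : doubleGeomSum k 1 = k * (k - 1) / 2 := by
  induction k with
  | zero => simp [doubleGeomSum]
  | succ k ih =>
    simp only [doubleGeomSum, sum_range_succ, one_pow, sum_const, card_range, nsmul_eq_mul,
      mul_one] at ih ⊢
    push_cast
    linear_combination ih

lemma doubleGeomSum_le_doubleGeomSum_one (k : ℕ) {x : ℝ} (hx₀ : 0 ≤ x) (hx₁ : x ≤ 1) :
    doubleGeomSum k x ≤ doubleGeomSum k 1 := by
  unfold doubleGeomSum
  gcongr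

lemma one_le_doubleGeomSum {k : ℕ} (hk : 2 ≤ k) {x : ℝ} (hx : 0 ≤ x) : 1 ≤ doubleGeomSum k x :=
  calc (1 : ℝ) = ∑ j ∈ range 1, x ^ j := by simp
    _ ≤ doubleGeomSum k x :=
      single_le_sum (f := fun i => ∑ j ∈ range i, x ^ j) (fun i _ => by positivity)
        (mem_range.2 hk)

lemma continuous_doubleGeomSum (k : ℕ) : Continuous (doubleGeomSum k) := by
  unfold doubleGeomSum; fun_prop

lemma natCast_mul_natCast_sub_one_nonneg (k : ℕ) : 0 ≤ (k : ℝ) * (k - 1) := by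
  rcases k with _ | k
  · simp
  · push_cast; simp only [add_sub_cancel_right]; positivity

/-- For an offspring law with mean one this is the divided difference `(φ x - x) / (1 - x) ^ 2`
of its generating function `φ`, written as a power series that also makes sense at `x = 1`. -/
noncomputable def pgfDivDiff (p : ℕ → ℝ) (x : ℝ) : ℝ := ∑' k, p k * doubleGeomSum k x

section GeneratingFunction

variable {p : ℕ → ℝ}

lemma mul_doubleGeomSum_le (hp : ∀ k, 0 ≤ p k) (k : ℕ) {x : ℝ} (hx : x ∈ Set.Icc (0 : ℝ) 1) :
    p k * doubleGeomSum k x ≤ k * (k - 1) * p k / 2 := by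
  calc p k * doubleGeomSum k x ≤ p k * doubleGeomSum k 1 :=
        mul_le_mul_of_nonneg_left (doubleGeomSum_le_doubleGeomSum_one k hx.1 hx.2) (hp k)
    _ = k * (k - 1) * p k / 2 := by rw [doubleGeomSum_one]; ring

lemma summable_mul_doubleGeomSum (hp : ∀ k, 0 ≤ p k)
    (hσ : Summable fun k : ℕ => (k : ℝ) * ((k : ℝ) - 1) * p k) {x : ℝ}
    (hx : x ∈ Set.Icc (0 : ℝ) 1) : Summable fun k => p k * doubleGeomSum k x :=
  (hσ.div_const 2).of_nonneg_of_le (fun k => mul_nonneg (hp k) (doubleGeomSum_nonneg k hx.1))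
    (fun k => mul_doubleGeomSum_le hp k hx)

lemma continuousOn_pgfDivDiff (hp : ∀ k, 0 ≤ p k)
    (hσ : Summable fun k : ℕ => (k : ℝ) * ((k : ℝ) - 1) * p k) :
    ContinuousOn (pgfDivDiff p) (Set.Icc 0 1) := by
  refine continuousOn_tsum (fun k => ((continuous_doubleGeomSum k).const_mul (p k)).continuousOn)
    (hσ.div_const 2) fun k x hx => ?_
  rw [Real.norm_of_nonneg (mul_nonneg (hp k) (doubleGeomSum_nonneg k hx.1))]
  exact mul_doubleGeomSum_le hp k hx

lemma pgfDivDiff_one :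
    pgfDivDiff p 1 = (∑' k : ℕ, (k : ℝ) * ((k : ℝ) - 1) * p k) / 2 := by
  simp only [pgfDivDiff, doubleGeomSum_one, ← tsum_div_const]
  exact tsum_congr fun k => by ring

lemma le_pgfDivDiff (hp : ∀ k, 0 ≤ p k)
    (hσ : Summable fun k : ℕ => (k : ℝ) * ((k : ℝ) - 1) * p k) {m : ℕ} (hm : 2 ≤ m) {x : ℝ}
    (hx : x ∈ Set.Icc (0 : ℝ) 1) : p m ≤ pgfDivDiff p x :=
  calc p m ≤ p m * doubleGeomSum m x := le_mul_of_one_le_right (hp m) (one_le_doubleGeomSum hm hx.1)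
    _ ≤ pgfDivDiff p x := (summable_mul_doubleGeomSum hp hσ hx).le_tsum m
        fun k _ => mul_nonneg (hp k) (doubleGeomSum_nonneg k hx.1)

lemma tsum_mul_pow_eq_add_sq_mul_pgfDivDiff (hp : ∀ k, 0 ≤ p k) (hp_summable : Summable p)
    (hp_total : ∑' k, p k = 1) (hmean_summable : Summable fun k : ℕ => (k : ℝ) * p k)
    (hmean : ∑' k : ℕ, (k : ℝ) * p k = 1)
    (hσ : Summable fun k : ℕ => (k : ℝ) * ((k : ℝ) - 1) * p k) {x : ℝ}
    (hx : x ∈ Set.Icc (0 : ℝ) 1) :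
    ∑' k, p k * x ^ k = x + (1 - x) ^ 2 * pgfDivDiff p x := by
  have hterm : ∀ k : ℕ, p k * x ^ k
      = p k - (1 - x) * (k * p k) + (1 - x) ^ 2 * (p k * doubleGeomSum k x) := fun k => by
    linear_combination p k * pow_sub_one_add_mul_eq_sq_mul_doubleGeomSum k x
  rw [tsum_congr hterm, (hp_summable.sub (hmean_summable.mul_left _)).tsum_add
    ((summable_mul_doubleGeomSum hp hσ hx).mul_left _), hp_summable.tsum_sub
    (hmean_summable.mul_left _), tsum_mul_left, tsum_mul_left, hp_total, hmean, pgfDivDiff]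
  ring

lemma tsum_mul_pow_lt_one (hp : ∀ k, 0 ≤ p k) (hp_summable : Summable p)
    (hp_total : ∑' k, p k = 1) {m : ℕ} (hm : m ≠ 0) (hpm : 0 < p m) {x : ℝ} (hx₀ : 0 ≤ x)
    (hx₁ : x < 1) : ∑' k, p k * x ^ k < 1 := by
  have hle : ∀ k, p k * x ^ k ≤ p k := fun k =>
    mul_le_of_le_one_right (hp k) (pow_le_one₀ hx₀ hx₁.le)
  rw [← hp_total]
  exact Summable.tsum_lt_tsum hle (mul_lt_of_lt_one_right hpm (pow_lt_one₀ hx₀ hx₁ hm))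
    (hp_summable.of_nonneg_of_le (fun k => mul_nonneg (hp k) (pow_nonneg hx₀ k)) hle) hp_summable

lemma exists_two_le_pos_of_tsum_natCast_mul_eq_one (hp : ∀ k, 0 ≤ p k)
    (hmean : ∑' k : ℕ, (k : ℝ) * p k = 1) (hp1 : p 1 < 1) : ∃ m, 2 ≤ m ∧ 0 < p m := by
  by_contra! hsmall
  have hmean_eq : ∑' k : ℕ, (k : ℝ) * p k = p 1 := by
    rw [tsum_eq_single 1 fun k hk => ?_, Nat.cast_one, one_mul]
    rcases k with _ | _ | k
    · simp
    · exact absurd rfl hk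
    · simp [le_antisymm (hsmall (k + 2) (by omega)) (hp _)]
  linarith

lemma tsum_natCast_mul_sub_one_mul_pos (hp : ∀ k, 0 ≤ p k)
    (hσ : Summable fun k : ℕ => (k : ℝ) * ((k : ℝ) - 1) * p k) {m : ℕ} (hm : 2 ≤ m)
    (hpm : 0 < p m) : 0 < ∑' k : ℕ, (k : ℝ) * ((k : ℝ) - 1) * p k := by
  have hm' : (2 : ℝ) ≤ m := by exact_mod_cast hm
  exact lt_of_lt_of_le (mul_pos (mul_pos (by linarith) (by linarith)) hpm)
    (hσ.le_tsum m fun k _ => mul_nonneg (natCast_mul_natCast_sub_one_nonneg k) (hp k))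

end GeneratingFunction

lemma tendsto_div_natCast_of_tendsto_succ_sub {v : ℕ → ℝ} {a : ℝ}
    (hv : Tendsto (fun n => v (n + 1) - v n) atTop (𝓝 a)) :
    Tendsto (fun n : ℕ => v n / n) atTop (𝓝 a) := by
  have hmean : Tendsto (fun n : ℕ => (n : ℝ)⁻¹ * (v n - v 0)) atTop (𝓝 a) := by
    simpa only [sum_range_sub (fun i => v i)] using hv.cesaro
  have hinit : Tendsto (fun n : ℕ => (n : ℝ)⁻¹ * v 0) atTop (𝓝 0) := by
    simpa using tendsto_inv_atTop_nhds_zero_nat.mul_const (v 0)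
  simpa [div_eq_inv_mul, mul_sub] using hmean.add hinit

section QuadraticRecursion

variable {u h : ℕ → ℝ}

lemma inv_succ_sub_inv_of_sub_sq_mul (hu : ∀ n, 0 < u n)
    (hrec : ∀ n, u (n + 1) = u n - u n ^ 2 * h n) (n : ℕ) :
    (u (n + 1))⁻¹ - (u n)⁻¹ = h n / (1 - u n * h n) := by
  have hfactor : u (n + 1) = u n * (1 - u n * h n) := by rw [hrec]; ring
  have hne : 1 - u n * h n ≠ 0 := by
    intro h0
    have := hu (n + 1)
    rw [hfactor, h0, mul_zero] at this
    exact lt_irrefl 0 this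
  rw [hfactor]
  field_simp [(hu n).ne']
  ring

lemma tendsto_zero_of_sub_sq_mul (hu : ∀ n, 0 < u n)
    (hrec : ∀ n, u (n + 1) = u n - u n ^ 2 * h n) {c : ℝ} (hc : 0 < c) (hh : ∀ n, c ≤ h n) :
    Tendsto u atTop (𝓝 0) := by
  have hstep : ∀ n, c ≤ (u (n + 1))⁻¹ - (u n)⁻¹ := by
    intro n
    have hpos : 0 < 1 - u n * h n := by
      have := hu (n + 1)
      rw [hrec, show u n - u n ^ 2 * h n = u n * (1 - u n * h n) by ring] at this
      exact pos_of_mul_pos_right this (hu n).le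
    have hle : 1 - u n * h n ≤ 1 := by nlinarith [hu n, hh n]
    rw [inv_succ_sub_inv_of_sub_sq_mul hu hrec, le_div_iff₀ hpos]
    nlinarith [hh n]
  have hgrowth : ∀ n : ℕ, c * n ≤ (u n)⁻¹ := by
    intro n
    induction n with
    | zero => simpa using (hu 0).le
    | succ n ih => push_cast; linarith [hstep n]
  have hinv : Tendsto (fun n => (u n)⁻¹) atTop atTop :=
    tendsto_atTop_mono hgrowth
      ((tendsto_natCast_atTop_atTop).const_mul_atTop hc)
  simpa only [Pi.inv_def, inv_inv] using hinv.inv_tendsto_atTop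

lemma tendsto_natCast_mul_of_sub_sq_mul (hu : ∀ n, 0 < u n)
    (hrec : ∀ n, u (n + 1) = u n - u n ^ 2 * h n) (hu₀ : Tendsto u atTop (𝓝 0))
    {a : ℝ} (ha : a ≠ 0) (hh : Tendsto h atTop (𝓝 a)) :
    Tendsto (fun n : ℕ => n * u n) atTop (𝓝 a⁻¹) := by
  have hdiff : Tendsto (fun n => (u (n + 1))⁻¹ - (u n)⁻¹) atTop (𝓝 a) := by
    have := hh.div (tendsto_const_nhds.sub (hu₀.mul hh)) (by simp : (1 : ℝ) - 0 * a ≠ 0)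
    rw [zero_mul, sub_zero, div_one] at this
    exact this.congr fun n => (inv_succ_sub_inv_of_sub_sq_mul hu hrec n).symm
  have := (tendsto_div_natCast_of_tendsto_succ_sub (v := fun n => (u n)⁻¹) hdiff).inv₀ ha
  simpa [div_eq_mul_inv, mul_comm] using this

end QuadraticRecursion

/-- Kolmogorov's asymptotics for the survival probability of a critical Galton–Watson
process: `n · P(survival to generation n) → 2/σ²` where `σ² = φ''(1)` is the second
factorial moment of the offspring law. -/
theorem kolmogorov_critical_survival (p : ℕ → ℝ)
    (hp_nonneg : ∀ k, 0 ≤ p k) (hp_summable : Summable p) (hp_total : ∑' k : ℕ, p k = 1)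
    (hmean_summable : Summable (fun k : ℕ => (k : ℝ) * p k))
    (hmean : ∑' k : ℕ, (k : ℝ) * p k = 1)
    (hp1 : p 1 < 1)
    (σ2 : ℝ)
    (hσ_summable : Summable (fun k : ℕ => (k : ℝ) * ((k : ℝ) - 1) * p k))
    (hσ : σ2 = ∑' k : ℕ, (k : ℝ) * ((k : ℝ) - 1) * p k)
    (φ : ℝ → ℝ) (hφ : ∀ z, φ z = ∑' k : ℕ, p k * z ^ k) :
    0 < σ2 ∧
      Tendsto (fun n : ℕ => (n : ℝ) * (1 - φ^[n] 0)) atTop (nhds (2 / σ2)) := by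
  obtain ⟨m, hm, hpm⟩ := exists_two_le_pos_of_tsum_natCast_mul_eq_one hp_nonneg hmean hp1
  have hH_ge : ∀ x ∈ Set.Icc (0 : ℝ) 1, p m ≤ pgfDivDiff p x :=
    fun x hx => le_pgfDivDiff hp_nonneg hσ_summable hm hx
  have hφ_eq : ∀ x ∈ Set.Icc (0 : ℝ) 1, φ x = x + (1 - x) ^ 2 * pgfDivDiff p x := fun x hx =>
    (hφ x).trans (tsum_mul_pow_eq_add_sq_mul_pgfDivDiff hp_nonneg hp_summable hp_total
      hmean_summable hmean hσ_summable hx)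
  have hmaps : Set.MapsTo φ (Set.Ico 0 1) (Set.Ico 0 1) := fun x hx => by
    have := hH_ge x (Set.Ico_subset_Icc_self hx)
    refine ⟨?_, hφ x ▸ tsum_mul_pow_lt_one hp_nonneg hp_summable hp_total (by omega) hpm hx.1 hx.2⟩
    rw [hφ_eq x (Set.Ico_subset_Icc_self hx)]
    nlinarith [hx.1]
  have hmem : ∀ n, φ^[n] 0 ∈ Set.Icc (0 : ℝ) 1 := fun n =>
    Set.Ico_subset_Icc_self (hmaps.iterate n ⟨le_rfl, zero_lt_one⟩)
  have hu_pos : ∀ n, 0 < 1 - φ^[n] 0 := fun n => sub_pos.2 (hmaps.iterate n ⟨le_rfl, zero_lt_one⟩).2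
  have hrec : ∀ n, 1 - φ^[n + 1] 0
      = (1 - φ^[n] 0) - (1 - φ^[n] 0) ^ 2 * pgfDivDiff p (φ^[n] 0) := fun n => by
    rw [Function.iterate_succ_apply', hφ_eq _ (hmem n)]
    ring
  have hu₀ : Tendsto (fun n => 1 - φ^[n] 0) atTop (𝓝 0) :=
    tendsto_zero_of_sub_sq_mul hu_pos hrec hpm fun n => hH_ge _ (hmem n)
  have hH : Tendsto (fun n => pgfDivDiff p (φ^[n] 0)) atTop (𝓝 (σ2 / 2)) := by
    have hx : Tendsto (fun n => φ^[n] 0) atTop (𝓝[Set.Icc 0 1] 1) :=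
      tendsto_nhdsWithin_iff.2
        ⟨by simpa using (tendsto_const_nhds (x := (1 : ℝ))).sub hu₀, .of_forall hmem⟩
    rw [hσ, ← pgfDivDiff_one]
    exact ((continuousOn_pgfDivDiff hp_nonneg hσ_summable) 1 ⟨zero_le_one, le_rfl⟩).tendsto.comp hx
  have hσ_pos : 0 < σ2 := hσ ▸ tsum_natCast_mul_sub_one_mul_pos hp_nonneg hσ_summable hm hpm
  exact ⟨hσ_pos, by simpa only [inv_div] using
    tendsto_natCast_mul_of_sub_sq_mul hu_pos hrec hu₀ (by positivity) hH⟩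
end

section
/- (Heathcote–Seneta–Vere-Jones subcritical limit.) Let (p_k)_{k≥0} be a probability distribution on the nonnegative integers with mean μ := Σ_{k≥0} k·p_k satisfying 0 < μ < 1, and suppose the L log L condition holds: Σ_{k≥1} p_k·k·log k < ∞. Let φ(z) = Σ_{k≥0} p_k z^k be its probability generating function. Then the limit lim_{n→∞} (1 - φ^{[n]}(0))/μ^n exists and is a strictly positive real number; i.e., the survival probability of the subcritical Galton–Watson process up to generation n is asymptotically a positive constant times μ^n. -/
/-!
Write `q n = 1 - φ^[n] 0`, so that `q (n + 1) = 1 - φ (1 - q n)`. Termwise,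
`1 - (1 - s)^k ≤ k s` (Bernoulli) and `k s - (1 - (1 - s)^k) ≤ s k min(1, k s)`, hence
`μ s - s δ(s) ≤ 1 - φ (1 - s) ≤ μ s` with `δ(s) = ∑ pₖ k min(1, k s)`. The upper bound makes
`q n / μⁿ` decreasing and `q n ≤ μⁿ`; the lower bound gives
`q (n+1) / μⁿ⁺¹ ≥ (q n / μⁿ) (1 - δ(μⁿ) / μ)`. Since `∑ₙ min(1, k μⁿ) = O(1 + log k)`, the
`L log L` condition makes `∑ₙ δ(μⁿ)` finite, and the infinite product `∏ (1 - δ(μⁿ)/μ)`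
keeps the decreasing limit away from zero.
-/

open Filter Topology Finset

theorem one_sub_one_sub_pow_le_mul {s : ℝ} (hs : s ≤ 2) (k : ℕ) : 1 - (1 - s) ^ k ≤ k * s := by
  have := one_add_mul_le_pow (a := -s) (by linarith) k
  rw [← sub_eq_add_neg] at this
  linarith

theorem mul_sub_one_sub_one_sub_pow_le {s : ℝ} (hs0 : 0 ≤ s) (hs1 : s ≤ 1) (k : ℕ) :
    k * s - (1 - (1 - s) ^ k) ≤ s * k * min 1 (k * s) := by
  induction k with
  | zero => simp
  | succ k ih =>
    have hmin : 1 - (1 - s) ^ k ≤ min 1 (k * s) :=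
      le_min (by linarith [pow_nonneg (sub_nonneg.2 hs1) k])
        (one_sub_one_sub_pow_le_mul (by linarith) k)
    have hmono : min 1 (k * s) ≤ min 1 ((k + 1 : ℕ) * s) :=
      min_le_min_left _ (by push_cast; linarith)
    calc ((k + 1 : ℕ) : ℝ) * s - (1 - (1 - s) ^ (k + 1))
        = (k * s - (1 - (1 - s) ^ k)) + s * (1 - (1 - s) ^ k) := by push_cast; ring
      _ ≤ s * k * min 1 (k * s) + s * min 1 (k * s) := by gcongr
      _ = s * (k + 1 : ℕ) * min 1 (k * s) := by push_cast; ring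
      _ ≤ s * (k + 1 : ℕ) * min 1 ((k + 1 : ℕ) * s) := by gcongr

theorem tsum_min_one_mul_pow_le {a x : ℝ} (ha0 : 0 ≤ a) (ha1 : a < 1) (hx : 0 ≤ x) {N : ℕ}
    (hN : x * a ^ N ≤ 1) : ∑' n, min 1 (x * a ^ n) ≤ N + (1 - a)⁻¹ := by
  have hgeom : Summable fun n => x * a ^ n := (summable_geometric_of_lt_one ha0 ha1).mul_left x
  have hsum : Summable fun n => min 1 (x * a ^ n) :=
    hgeom.of_nonneg_of_le (fun n => le_min zero_le_one (by positivity)) fun n => min_le_right _ _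
  rw [← hsum.sum_add_tsum_nat_add N]
  gcongr
  · calc ∑ n ∈ range N, min 1 (x * a ^ n) ≤ ∑ n ∈ range N, (1 : ℝ) :=
          sum_le_sum fun n _ => min_le_left _ _
      _ = N := by simp
  · calc ∑' n, min 1 (x * a ^ (n + N)) ≤ ∑' n, x * a ^ N * a ^ n :=
          ((summable_nat_add_iff N).2 hsum).tsum_le_tsum
            (fun n => (min_le_right _ _).trans_eq (by ring))
            ((summable_geometric_of_lt_one ha0 ha1).mul_left _)
      _ = x * a ^ N * (1 - a)⁻¹ := by rw [tsum_mul_left, tsum_geometric_of_lt_one ha0 ha1]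
      _ ≤ (1 - a)⁻¹ := mul_le_of_le_one_left (inv_nonneg.2 (by linarith)) hN

theorem natCast_mul_pow_ceil_log_div_le_one {a : ℝ} (ha0 : 0 < a) (ha1 : a < 1) (k : ℕ) :
    (k : ℝ) * a ^ ⌈Real.log k / -Real.log a⌉₊ ≤ 1 := by
  rcases Nat.eq_zero_or_pos k with rfl | hk
  · simp
  have hk' : (0 : ℝ) < k := Nat.cast_pos.2 hk
  have hloga : 0 < -Real.log a := neg_pos.2 (Real.log_neg ha0 ha1)
  have hceil := Nat.le_ceil (Real.log k / -Real.log a)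
  rw [div_le_iff₀ hloga] at hceil
  rw [← Real.log_nonpos_iff (by positivity), Real.log_mul hk'.ne' (by positivity), Real.log_pow]
  linarith

/-- The error term `δ(s) = ∑ pₖ k min(1, k s)` of the linearisation `1 - φ (1 - s) ≈ μ s`. -/
noncomputable def linearizationDefect (p : ℕ → ℝ) (s : ℝ) : ℝ :=
  ∑' k : ℕ, p k * k * min 1 (k * s)

section GeneratingFunction

variable {p : ℕ → ℝ} {μ s z : ℝ}

theorem exists_ne_zero_pos_of_hasSum_natCast_mul (hp0 : ∀ k, 0 ≤ p k)
    (hμ : HasSum (fun k : ℕ => (k : ℝ) * p k) μ) (hμ0 : 0 < μ) : ∃ K, K ≠ 0 ∧ 0 < p K := by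
  by_contra! h
  have hzero : (fun k : ℕ => (k : ℝ) * p k) = 0 := funext fun k => by
    rcases eq_or_ne k 0 with rfl | hk
    · simp
    · simp [le_antisymm (h k hk) (hp0 k)]
  rw [hzero] at hμ
  linarith [hμ.unique hasSum_zero]

theorem summable_mul_pow (hp0 : ∀ k, 0 ≤ p k) (hp : Summable p) (hz0 : 0 ≤ z) (hz1 : z ≤ 1) :
    Summable fun k => p k * z ^ k :=
  hp.of_nonneg_of_le (fun k => mul_nonneg (hp0 k) (pow_nonneg hz0 k))
    fun k => mul_le_of_le_one_right (hp0 k) (pow_le_one₀ hz0 hz1)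

theorem hasSum_mul_one_sub_pow (hp0 : ∀ k, 0 ≤ p k) (hp : HasSum p 1) (hz0 : 0 ≤ z)
    (hz1 : z ≤ 1) : HasSum (fun k => p k * (1 - z ^ k)) (1 - ∑' k, p k * z ^ k) := by
  simpa only [mul_one_sub] using hp.sub (summable_mul_pow hp0 hp.summable hz0 hz1).hasSum

theorem tsum_mul_pow_lt_one_s3 (hp0 : ∀ k, 0 ≤ p k) (hp : HasSum p 1) {K : ℕ} (hK : K ≠ 0)
    (hpK : 0 < p K) (hz0 : 0 ≤ z) (hz1 : z < 1) : ∑' k, p k * z ^ k < 1 := by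
  rw [← hp.tsum_eq]
  exact (summable_mul_pow hp0 hp.summable hz0 hz1.le).tsum_lt_tsum
    (fun k => mul_le_of_le_one_right (hp0 k) (pow_le_one₀ hz0 hz1.le))
    (mul_lt_of_lt_one_right hpK (pow_lt_one₀ hz0 hz1 hK)) hp.summable

theorem summable_mul_natCast_mul_min (hp0 : ∀ k, 0 ≤ p k)
    (hmean : Summable fun k : ℕ => (k : ℝ) * p k) (hs : 0 ≤ s) :
    Summable fun k : ℕ => p k * k * min 1 (k * s) :=
  hmean.of_nonneg_of_le
    (fun k => mul_nonneg (mul_nonneg (hp0 k) k.cast_nonneg) (le_min zero_le_one (by positivity)))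
    fun k => (mul_le_of_le_one_right (mul_nonneg (hp0 k) k.cast_nonneg) (min_le_left _ _)).trans_eq
      (mul_comm _ _)

theorem linearizationDefect_nonneg (hp0 : ∀ k, 0 ≤ p k) (hs : 0 ≤ s) :
    0 ≤ linearizationDefect p s :=
  tsum_nonneg fun k =>
    mul_nonneg (mul_nonneg (hp0 k) k.cast_nonneg) (le_min zero_le_one (by positivity))

theorem monotoneOn_linearizationDefect (hp0 : ∀ k, 0 ≤ p k)
    (hmean : Summable fun k : ℕ => (k : ℝ) * p k) :
    MonotoneOn (linearizationDefect p) (Set.Ici 0) := fun s hs t ht hst =>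
  (summable_mul_natCast_mul_min hp0 hmean hs).tsum_le_tsum
    (fun k => mul_le_mul_of_nonneg_left (min_le_min_left _ (by gcongr))
      (mul_nonneg (hp0 k) k.cast_nonneg))
    (summable_mul_natCast_mul_min hp0 hmean ht)

theorem one_sub_tsum_mul_one_sub_pow_le (hp0 : ∀ k, 0 ≤ p k) (hp : HasSum p 1)
    (hμ : HasSum (fun k : ℕ => (k : ℝ) * p k) μ) (hs0 : 0 ≤ s) (hs1 : s ≤ 1) :
    1 - ∑' k, p k * (1 - s) ^ k ≤ μ * s :=
  hasSum_le (fun k => (mul_le_mul_of_nonneg_left (one_sub_one_sub_pow_le_mul (by linarith) k)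
      (hp0 k)).trans_eq (by ring))
    (hasSum_mul_one_sub_pow hp0 hp (by linarith) (by linarith)) (hμ.mul_right s)

theorem mul_sub_mul_linearizationDefect_le (hp0 : ∀ k, 0 ≤ p k) (hp : HasSum p 1)
    (hμ : HasSum (fun k : ℕ => (k : ℝ) * p k) μ) (hs0 : 0 ≤ s) (hs1 : s ≤ 1) :
    μ * s - s * linearizationDefect p s ≤ 1 - ∑' k, p k * (1 - s) ^ k := by
  have hdefect : HasSum (fun k => s * (p k * k * min 1 (k * s))) (s * linearizationDefect p s) :=
    (summable_mul_natCast_mul_min hp0 hμ.summable hs0).hasSum.mul_left s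
  have hterm : ∀ k : ℕ, k * p k * s - p k * (1 - (1 - s) ^ k) ≤ s * (p k * k * min 1 (k * s)) :=
    fun k => by
      linarith [mul_le_mul_of_nonneg_left (mul_sub_one_sub_one_sub_pow_le hs0 hs1 k) (hp0 k)]
  have herror := hasSum_le hterm
    ((hμ.mul_right s).sub (hasSum_mul_one_sub_pow hp0 hp (by linarith) (by linarith))) hdefect
  linarith

end GeneratingFunction

theorem summable_tsum_of_summable_tsum_swap_of_nonneg {F : ℕ → ℕ → ℝ} (hF : ∀ k n, 0 ≤ F k n)
    (hrow : ∀ k, Summable (F k)) (hsum : Summable fun k => ∑' n, F k n) :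
    Summable fun n => ∑' k, F k n := by
  have hF' : 0 ≤ Function.uncurry F := fun x => hF x.1 x.2
  have := ((summable_prod_of_nonneg hF').2 ⟨hrow, hsum⟩).prod_symm
  exact ((summable_prod_of_nonneg fun x => hF' x.swap).1 this).2

/-- `∑ₙ min(1, k aⁿ) ≤ log k / log a⁻¹ + O(1)`, so the `L log L` condition suffices. -/
theorem summable_linearizationDefect_pow {p : ℕ → ℝ} (hp0 : ∀ k, 0 ≤ p k)
    (hmean : Summable fun k : ℕ => (k : ℝ) * p k)
    (hLlogL : Summable fun k : ℕ => p k * k * Real.log k) {a : ℝ} (ha0 : 0 < a) (ha1 : a < 1) :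
    Summable fun n => linearizationDefect p (a ^ n) := by
  have hpk : ∀ k : ℕ, 0 ≤ p k * k := fun k => mul_nonneg (hp0 k) k.cast_nonneg
  have hloga : 0 < -Real.log a := neg_pos.2 (Real.log_neg ha0 ha1)
  have hrow : ∀ k : ℕ, ∑' n, min 1 (k * a ^ n) ≤ Real.log k / -Real.log a + 1 + (1 - a)⁻¹ :=
    fun k => by
    have hceil := (Nat.ceil_lt_add_one (div_nonneg (Real.log_natCast_nonneg k) hloga.le)).le
    have := tsum_min_one_mul_pow_le ha0.le ha1 k.cast_nonneg
      (natCast_mul_pow_ceil_log_div_le_one ha0 ha1 k)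
    linarith
  have hF : ∀ k n : ℕ, 0 ≤ p k * k * min 1 (k * a ^ n) :=
    fun k n => mul_nonneg (hpk k) (le_min zero_le_one (by positivity))
  refine summable_tsum_of_summable_tsum_swap_of_nonneg hF
    (fun k => ((summable_geometric_of_lt_one ha0.le ha1).mul_left (p k * k * k)).of_nonneg_of_le
      (hF k) fun n => (mul_le_mul_of_nonneg_left (min_le_right _ _) (hpk k)).trans_eq (by ring)) ?_
  refine ((hLlogL.mul_left (-Real.log a)⁻¹).add (hmean.mul_left (1 + (1 - a)⁻¹))).of_nonneg_of_le
    (fun k => tsum_nonneg (hF k)) fun k => ?_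
  calc ∑' n, p k * k * min 1 (k * a ^ n) = p k * k * ∑' n, min 1 (k * a ^ n) := tsum_mul_left
    _ ≤ p k * k * (Real.log k / -Real.log a + 1 + (1 - a)⁻¹) :=
      mul_le_mul_of_nonneg_left (hrow k) (hpk k)
    _ = (-Real.log a)⁻¹ * (p k * k * Real.log k) + (1 + (1 - a)⁻¹) * (k * p k) := by ring

section AntitoneSequence

variable {r c : ℕ → ℝ}

theorem Antitone.mul_one_sub_sum_le (hr : Antitone r) (hc : ∀ n, 0 ≤ c n)
    (hstep : ∀ n, r n * (1 - c n) ≤ r (n + 1)) (N t : ℕ) :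
    r N * (1 - ∑ j ∈ range t, c (N + j)) ≤ r (N + t) := by
  induction t with
  | zero => simp
  | succ t ih =>
    have hle : r (N + t) * c (N + t) ≤ r N * c (N + t) :=
      mul_le_mul_of_nonneg_right (hr (Nat.le_add_right N t)) (hc _)
    rw [sum_range_succ, ← add_assoc]
    linarith [hstep (N + t)]

/-- Weierstrass' inequality `∏ (1 - cⱼ) ≥ 1 - ∑ cⱼ` on a tail with `∑ cⱼ < 1/2`. -/
theorem Antitone.exists_pos_tendsto_of_mul_one_sub_le (hr : Antitone r) (hr_pos : ∀ n, 0 < r n)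
    (hc : ∀ n, 0 ≤ c n) (hc_sum : Summable c) (hstep : ∀ n, r n * (1 - c n) ≤ r (n + 1)) :
    ∃ L, 0 < L ∧ Tendsto r atTop (𝓝 L) := by
  obtain ⟨N, hN⟩ := ((tendsto_sum_nat_add c).eventually (gt_mem_nhds one_half_pos)).exists
  have htail : ∀ t, ∑ j ∈ range t, c (N + j) ≤ 1 / 2 := fun t => by
    have := ((summable_nat_add_iff N).2 hc_sum).sum_le_tsum (range t) fun j _ => hc (j + N)
    simp only [add_comm N] at this ⊢
    linarith
  have hlow : ∀ m, r N / 2 ≤ r m := fun m => by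
    rcases le_or_gt N m with hm | hm
    · obtain ⟨t, rfl⟩ := Nat.exists_eq_add_of_le hm
      nlinarith [hr.mul_one_sub_sum_le hc hstep N t, htail t, hr_pos N]
    · linarith [hr hm.le, hr_pos N]
  have hlim : Tendsto r atTop (𝓝 (⨅ n, r n)) :=
    tendsto_atTop_ciInf hr ⟨0, by rintro _ ⟨n, rfl⟩; exact (hr_pos n).le⟩
  refine ⟨⨅ n, r n, ?_, hlim⟩
  linarith [le_ciInf hlow, hr_pos N]

end AntitoneSequence

theorem exists_pos_tendsto_div_pow_of_step_bounds {μ : ℝ} {q : ℕ → ℝ} {δ : ℝ → ℝ}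
    (hμ : 0 < μ) (hq_pos : ∀ n, 0 < q n) (hq_zero : q 0 ≤ 1)
    (hupper : ∀ n, q (n + 1) ≤ μ * q n) (hlower : ∀ n, μ * q n - q n * δ (q n) ≤ q (n + 1))
    (hδ_mono : MonotoneOn δ (Set.Ici 0)) (hδ_nonneg : ∀ n, 0 ≤ δ (μ ^ n))
    (hδ_sum : Summable fun n => δ (μ ^ n)) :
    ∃ L, 0 < L ∧ Tendsto (fun n => q n / μ ^ n) atTop (𝓝 L) := by
  have hq_le_pow : ∀ n, q n ≤ μ ^ n := by
    intro n
    induction n with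
    | zero => simpa using hq_zero
    | succ n ih => rw [pow_succ']; exact (hupper n).trans (mul_le_mul_of_nonneg_left ih hμ.le)
  have hstep : ∀ n, μ * q n - q n * δ (μ ^ n) ≤ q (n + 1) := fun n => by
    have := hδ_mono (hq_pos n).le (pow_pos hμ n).le (hq_le_pow n)
    nlinarith [hlower n, hq_pos n]
  refine Antitone.exists_pos_tendsto_of_mul_one_sub_le (c := fun n => δ (μ ^ n) / μ)
    (antitone_nat_of_succ_le fun n => ?_) (fun n => div_pos (hq_pos n) (pow_pos hμ n))
    (fun n => div_nonneg (hδ_nonneg n) hμ.le) (hδ_sum.div_const μ) fun n => ?_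
  · rw [pow_succ', ← div_div, div_le_div_iff_of_pos_right (pow_pos hμ n), div_le_iff₀' hμ]
    exact hupper n
  · rw [pow_succ', ← div_div, div_mul_eq_mul_div, div_le_div_iff_of_pos_right (pow_pos hμ n),
      le_div_iff₀ hμ]
    calc q n * (1 - δ (μ ^ n) / μ) * μ = μ * q n - q n * δ (μ ^ n) := by field_simp
      _ ≤ q (n + 1) := hstep n

/-- Heathcote–Seneta–Vere-Jones: for a subcritical Galton–Watson process with mean
`μ ∈ (0,1)` satisfying the `L log L` condition, `(1 - φ^[n](0))/μⁿ` converges to a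
strictly positive limit. -/
theorem heathcote_seneta_vere_jones (p : ℕ → ℝ)
    (hp_nonneg : ∀ k, 0 ≤ p k) (hp_summable : Summable p) (hp_total : ∑' k : ℕ, p k = 1)
    (μ : ℝ)
    (hmean_summable : Summable (fun k : ℕ => (k : ℝ) * p k))
    (hmean : ∑' k : ℕ, (k : ℝ) * p k = μ)
    (hμ0 : 0 < μ) (hμ1 : μ < 1)
    (hLlogL : Summable (fun k : ℕ => p k * (k : ℝ) * Real.log k))
    (φ : ℝ → ℝ) (hφ : ∀ z, φ z = ∑' k : ℕ, p k * z ^ k) :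
    ∃ L : ℝ, 0 < L ∧
      Tendsto (fun n : ℕ => (1 - φ^[n] 0) / μ ^ n) atTop (nhds L) := by
  have hp : HasSum p 1 := hp_total ▸ hp_summable.hasSum
  have hμ : HasSum (fun k : ℕ => (k : ℝ) * p k) μ := hmean ▸ hmean_summable.hasSum
  obtain ⟨K, hK, hpK⟩ := exists_ne_zero_pos_of_hasSum_natCast_mul hp_nonneg hμ hμ0
  set q : ℕ → ℝ := fun n => 1 - φ^[n] 0
  have hq_succ : ∀ n, q (n + 1) = 1 - ∑' k, p k * (1 - q n) ^ k := fun n => by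
    simp only [q, Function.iterate_succ_apply', hφ, sub_sub_cancel]
  have hq : ∀ n, 0 < q n ∧ q n ≤ 1 := by
    intro n
    induction n with
    | zero => simp [q]
    | succ n ih =>
      have hz0 : 0 ≤ 1 - q n := by linarith
      have hφ_nonneg : 0 ≤ ∑' k, p k * (1 - q n) ^ k :=
        tsum_nonneg fun k => mul_nonneg (hp_nonneg k) (pow_nonneg hz0 k)
      have hφ_lt_one := tsum_mul_pow_lt_one_s3 hp_nonneg hp hK hpK hz0 (by linarith : 1 - q n < 1)
      rw [hq_succ]
      constructor <;> linarith
  exact exists_pos_tendsto_div_pow_of_step_bounds (q := q) hμ0 (fun n => (hq n).1) (by simp [q])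
    (fun n => by
      rw [hq_succ]; exact one_sub_tsum_mul_one_sub_pow_le hp_nonneg hp hμ (hq n).1.le (hq n).2)
    (fun n => by
      rw [hq_succ]; exact mul_sub_mul_linearizationDefect_le hp_nonneg hp hμ (hq n).1.le (hq n).2)
    (monotoneOn_linearizationDefect hp_nonneg hmean_summable)
    (fun n => linearizationDefect_nonneg hp_nonneg (pow_pos hμ0 n).le)
    (summable_linearizationDefect_pow hp_nonneg hmean_summable hLlogL hμ0 hμ1)
end

section
/- Let (Ω, ℱ, P) be a probability space with a filtration (ℱ_n)_{n≥0}, and let (Z_n)_{n≥0} be a nonnegative-integer-valued, integrable supermartingale with respect to (ℱ_n). Suppose there exists δ > 0 such that for every n, almost surely on the event {Z_n ≥ 1} one has P(Z_{n+1} ≠ Z_n | ℱ_n) ≥ δ. Then Z_n → 0 almost surely; in particular, P(Z_n ≥ 1 for all n) = 0. -/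
/-!
A nonnegative supermartingale is bounded in L¹, so it converges almost surely; being
integer-valued, it is then eventually constant. If the final value were `m ≥ 1`, the conditional
probabilities of a change would eventually all be at least `δ`, so their sum diverges and Lévy's
conditional Borel–Cantelli lemma forces infinitely many changes, which is absurd.
-/

open Filter MeasureTheory Topology

theorem MeasureTheory.Supermartingale.exists_ae_tendsto_of_nonneg {Ω : Type*}
    {m0 : MeasurableSpace Ω} {μ : Measure Ω} [IsFiniteMeasure μ] {ℱ : Filtration ℕ m0}
    {f : ℕ → Ω → ℝ} (hf : Supermartingale f ℱ μ) (hnonneg : ∀ n, 0 ≤ᵐ[μ] f n) :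
    ∀ᵐ ω ∂μ, ∃ c, Tendsto (fun n => f n ω) atTop (𝓝 c) := by
  have hbdd : ∀ n, eLpNorm ((-f) n) 1 μ ≤ (∫ ω, f 0 ω ∂μ).toNNReal := by
    intro n
    have hle : ∫ ω, f n ω ∂μ ≤ ∫ ω, f 0 ω ∂μ := by
      simpa using hf.setIntegral_le (Nat.zero_le n) MeasurableSet.univ
    rw [Pi.neg_apply, eLpNorm_neg, eLpNorm_one_eq_lintegral_enorm, ENNReal.ofNNReal_toNNReal]
    calc ∫⁻ ω, ‖f n ω‖ₑ ∂μ = ENNReal.ofReal (∫ ω, ‖f n ω‖ ∂μ) :=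
          (ofReal_integral_norm_eq_lintegral_enorm (hf.integrable n)).symm
      _ = ENNReal.ofReal (∫ ω, f n ω ∂μ) := by
          rw [integral_congr_ae ((hnonneg n).mono fun ω hω => Real.norm_of_nonneg hω)]
      _ ≤ ENNReal.ofReal (∫ ω, f 0 ω ∂μ) := ENNReal.ofReal_le_ofReal hle
  filter_upwards [hf.neg.exists_ae_tendsto_of_bdd hbdd] with ω ⟨c, hc⟩
  exact ⟨-c, by simpa using hc.neg⟩

theorem exists_eventually_eq_natCast_of_tendsto {x : ℕ → ℝ} {c : ℝ}
    (hx : ∀ n, ∃ m : ℕ, x n = m) (h : Tendsto x atTop (𝓝 c)) :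
    ∃ m : ℕ, ∀ᶠ n in atTop, x n = m := by
  choose u hu using hx
  obtain rfl : x = fun n => (u n : ℝ) := funext hu
  obtain ⟨m, rfl⟩ : c ∈ Set.range ((↑) : ℕ → ℝ) :=
    Nat.isClosedEmbedding_coe_real.isClosed_range.mem_of_tendsto h
      (.of_forall fun n => ⟨u n, rfl⟩)
  have hum : Tendsto u atTop (𝓝 m) := Nat.isClosedEmbedding_coe_real.tendsto_nhds_iff.2 h
  rw [nhds_discrete, tendsto_pure] at hum
  exact ⟨m, hum.mono fun n hn => congrArg Nat.cast hn⟩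

theorem tendsto_sum_range_atTop_of_eventually_ge {f : ℕ → ℝ} {δ : ℝ} (hδ : 0 < δ)
    (hf : ∀ᶠ n in atTop, δ ≤ f n) :
    Tendsto (fun n => ∑ k ∈ Finset.range n, f k) atTop atTop := by
  obtain ⟨N, hN⟩ := eventually_atTop.1 hf
  rw [← tendsto_add_atTop_iff_nat N]
  refine tendsto_atTop_mono (fun n => ?_) (tendsto_atTop_add_const_left _
    (∑ k ∈ Finset.range N, f k) (tendsto_natCast_atTop_atTop.atTop_mul_const hδ))
  rw [add_comm n, Finset.sum_range_add]
  gcongr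
  calc (n : ℝ) * δ = ∑ _k ∈ Finset.range n, δ := by simp
    _ ≤ ∑ k ∈ Finset.range n, f (N + k) := Finset.sum_le_sum fun k _ => hN _ (by omega)

section changeSet

variable {Ω : Type*}

/-- The change between times `n` and `n + 1` is recorded at index `n + 1`, so that
`changeSet Z n` is `ℱ n`-measurable, as Lévy's Borel–Cantelli lemma requires. -/
def changeSet (Z : ℕ → Ω → ℝ) : ℕ → Set Ω
  | 0 => ∅
  | n + 1 => {ω | Z (n + 1) ω ≠ Z n ω}

theorem measurableSet_changeSet {m0 : MeasurableSpace Ω} {ℱ : Filtration ℕ m0}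
    {Z : ℕ → Ω → ℝ} (hZ : StronglyAdapted ℱ Z) : ∀ n, MeasurableSet[ℱ n] (changeSet Z n)
  | 0 => @MeasurableSet.empty _ (ℱ 0)
  | n + 1 => (measurableSet_eq_fun (hZ (n + 1)).measurable
      ((hZ n).mono (ℱ.mono n.le_succ)).measurable).compl

theorem notMem_limsup_changeSet_of_eventually_eq {Z : ℕ → Ω → ℝ} {ω : Ω} {c : ℝ}
    (h : ∀ᶠ n in atTop, Z n ω = c) : ω ∉ limsup (changeSet Z) atTop := by
  obtain ⟨N, hN⟩ := eventually_atTop.1 h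
  rw [mem_limsup_iff_frequently_mem, not_frequently]
  refine eventually_atTop.2 ⟨N + 1, fun n hn => ?_⟩
  cases n with
  | zero => omega
  | succ k => simp [changeSet, hN (k + 1) (by omega), hN k (by omega)]

end changeSet

/-- Abstract extinction lemma: a nonnegative-integer-valued supermartingale which, as long
as it is at least `1`, has a uniformly positive conditional probability of changing at the
next step, converges to `0` almost surely; in particular it cannot stay `≥ 1` forever. -/
theorem integer_supermartingale_extinction
    {Ω : Type*} {m0 : MeasurableSpace Ω} (P : Measure Ω) [IsProbabilityMeasure P]
    (ℱ : Filtration ℕ m0) (Z : ℕ → Ω → ℝ)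
    (hsuper : Supermartingale Z ℱ P)
    (hint : ∀ n ω, ∃ m : ℕ, Z n ω = m)
    (δ : ℝ) (hδ : 0 < δ)
    (hcond : ∀ n, ∀ᵐ ω ∂P, 1 ≤ Z n ω →
      δ ≤ (P[Set.indicator {ω' | Z (n + 1) ω' ≠ Z n ω'} (fun _ => (1 : ℝ)) | ℱ n]) ω) :
    (∀ᵐ ω ∂P, Tendsto (fun n => Z n ω) atTop (nhds 0)) ∧
      P {ω | ∀ n, 1 ≤ Z n ω} = 0 := by
  have hnonneg : ∀ n, 0 ≤ᵐ[P] Z n := fun n => .of_forall fun ω => by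
    obtain ⟨m, hm⟩ := hint n ω
    simp [hm]
  have hlim : ∀ᵐ ω ∂P, Tendsto (fun n => Z n ω) atTop (𝓝 0) := by
    filter_upwards [hsuper.exists_ae_tendsto_of_nonneg hnonneg,
      ae_mem_limsup_atTop_iff P (measurableSet_changeSet hsuper.stronglyAdapted),
      ae_all_iff.2 hcond] with ω ⟨c, hc⟩ hlevy hδω
    obtain ⟨m, hm⟩ := exists_eventually_eq_natCast_of_tendsto (hint · ω) hc
    rcases Nat.eq_zero_or_pos m with rfl | hm_pos
    · exact tendsto_const_nhds.congr' (hm.mono fun n hn => by simp [hn])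
    refine absurd (hlevy.2 (tendsto_sum_range_atTop_of_eventually_ge hδ (hm.mono fun n hn => ?_)))
      (notMem_limsup_changeSet_of_eventually_eq hm)
    exact hδω n (by rw [hn]; exact_mod_cast hm_pos)
  refine ⟨hlim, measure_mono_null ?_ (ae_iff.1 hlim)⟩
  intro ω hω hω0
  exact absurd (ge_of_tendsto' hω0 hω) (by norm_num)
end

section
/- (Extinction criterion.) Let (p_k)_{k≥0} be a probability distribution on the nonnegative integers with mean Σ_{k≥0} k·p_k ≤ 1 and with p_1 < 1, and let φ(z) = Σ_{k≥0} p_k z^k be its probability generating function. Then lim_{n→∞} φ^{[n]}(0) = 1; i.e., the critical or subcritical (non-degenerate) Galton–Watson process started from one particle dies out almost surely. -/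
/-!
Bernoulli's inequality `1 - z ^ k ≤ k (1 - z)` gives, for `0 ≤ z < 1`,
`1 - φ z = ∑ p_k (1 - z ^ k) ≤ (∑ k p_k) (1 - z) ≤ 1 - z`, and one of the two inequalities is
strict: the first if some `p_k > 0` with `k ≥ 2`, the second otherwise, since then the mean is
`p_1 < 1`. So `z < φ z` on `[0, 1)`; the iterates of `0` therefore increase to a fixed point of
`φ` in `[0, 1]`, which can only be `1`.
-/

open Filter Topology Set Function

theorem tendsto_iterate_of_lt_apply {α : Type*} [ConditionallyCompleteLinearOrder α]
    [TopologicalSpace α] [OrderTopology α] {f : α → α} {a b x : α}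
    (hmaps : MapsTo f (Icc a b) (Icc a b)) (hcont : ContinuousOn f (Icc a b))
    (hfb : f b = b) (hlt : ∀ z ∈ Ico a b, z < f z) (hx : x ∈ Icc a b) :
    Tendsto (fun n => f^[n] x) atTop (𝓝 b) := by
  have hmem (n : ℕ) : f^[n] x ∈ Icc a b := hmaps.iterate n hx
  have hle : ∀ z ∈ Icc a b, z ≤ f z := fun z hz =>
    hz.2.eq_or_lt.elim (fun h => h ▸ hfb.ge) fun h => (hlt z ⟨hz.1, h⟩).le
  have hmono : Monotone fun n => f^[n] x := monotone_nat_of_le_succ fun n => by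
    rw [iterate_succ_apply']
    exact hle _ (hmem n)
  have hL := tendsto_atTop_ciSup hmono ⟨b, forall_mem_range.2 fun n => (hmem n).2⟩
  set L := ⨆ n, f^[n] x
  have hLmem : L ∈ Icc a b := isClosed_Icc.mem_of_tendsto hL (.of_forall hmem)
  have hfix : f L = L := by
    refine tendsto_nhds_unique ?_ ((tendsto_add_atTop_iff_nat 1).2 hL)
    simp only [iterate_succ_apply']
    exact (hcont L hLmem).tendsto.comp (tendsto_nhdsWithin_iff.2 ⟨hL, .of_forall hmem⟩)
  obtain rfl : L = b := hLmem.2.eq_or_lt.resolve_right fun h => (hlt L ⟨hLmem.1, h⟩).ne' hfix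
  exact hL

theorem one_sub_pow_le_mul_one_sub {z : ℝ} (hz : -1 ≤ z) (k : ℕ) : 1 - z ^ k ≤ k * (1 - z) := by
  linarith [one_add_mul_sub_le_pow hz k]

theorem one_sub_pow_lt_mul_one_sub {z : ℝ} (hz₀ : 0 ≤ z) (hz₁ : z < 1) {k : ℕ} (hk : 2 ≤ k) :
    1 - z ^ k < k * (1 - z) := by
  obtain ⟨n, rfl⟩ := Nat.exists_eq_add_of_le' hk
  have hbern := one_sub_pow_le_mul_one_sub (by linarith : -1 ≤ z) (n + 1)
  have hpow : z ^ (n + 1) < 1 := pow_lt_one₀ hz₀ hz₁ n.succ_ne_zero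
  push_cast at hbern ⊢
  rw [pow_succ]
  nlinarith

theorem mul_one_sub_pow_le {q z : ℝ} (hq : 0 ≤ q) (hz : -1 ≤ z) (k : ℕ) :
    q * (1 - z ^ k) ≤ k * q * (1 - z) := by
  rw [mul_comm _ q, mul_assoc]
  exact mul_le_mul_of_nonneg_left (one_sub_pow_le_mul_one_sub hz k) hq

noncomputable def pgf (p : ℕ → ℝ) (z : ℝ) : ℝ := ∑' k, p k * z ^ k

section pgf

variable {p : ℕ → ℝ} {z : ℝ}

theorem mul_pow_le_self (hp : ∀ k, 0 ≤ p k) (hz : z ∈ Icc 0 1) (k : ℕ) : p k * z ^ k ≤ p k :=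
  mul_le_of_le_one_right (hp k) (pow_le_one₀ hz.1 hz.2)

theorem summable_pgf_term (hp : ∀ k, 0 ≤ p k) (hps : Summable p) (hz : z ∈ Icc 0 1) :
    Summable fun k => p k * z ^ k :=
  hps.of_nonneg_of_le (fun k => mul_nonneg (hp k) (pow_nonneg hz.1 k)) (mul_pow_le_self hp hz)

theorem mapsTo_pgf (hp : ∀ k, 0 ≤ p k) (hps : Summable p) (hp_one : ∑' k, p k = 1) :
    MapsTo (pgf p) (Icc 0 1) (Icc 0 1) := fun _ hz =>
  ⟨tsum_nonneg fun k => mul_nonneg (hp k) (pow_nonneg hz.1 k),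
    hp_one ▸ (summable_pgf_term hp hps hz).tsum_le_tsum (mul_pow_le_self hp hz) hps⟩

theorem continuousOn_pgf (hp : ∀ k, 0 ≤ p k) (hps : Summable p) :
    ContinuousOn (pgf p) (Icc 0 1) := by
  refine (tendstoUniformlyOn_tsum hps fun k z hz => ?_).continuousOn
    (.of_forall fun s => (continuous_finsetSum s fun _ _ => by fun_prop).continuousOn)
  rw [Real.norm_of_nonneg (mul_nonneg (hp k) (pow_nonneg hz.1 k))]
  exact mul_pow_le_self hp hz k

theorem pgf_one (hp_one : ∑' k, p k = 1) : pgf p 1 = 1 := by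
  simpa [pgf] using hp_one

theorem summable_mul_one_sub_pow (hp : ∀ k, 0 ≤ p k) (hps : Summable p) (hz : z ∈ Icc 0 1) :
    Summable fun k => p k * (1 - z ^ k) :=
  (hps.sub (summable_pgf_term hp hps hz)).congr fun _ => (mul_one_sub _ _).symm

theorem one_sub_pgf (hp : ∀ k, 0 ≤ p k) (hps : Summable p) (hp_one : ∑' k, p k = 1)
    (hz : z ∈ Icc 0 1) : 1 - pgf p z = ∑' k, p k * (1 - z ^ k) := by
  simp_rw [mul_one_sub]
  rw [hps.tsum_sub (summable_pgf_term hp hps hz), hp_one, pgf]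

theorem one_sub_pgf_le (hp : ∀ k, 0 ≤ p k) (hps : Summable p) (hp_one : ∑' k, p k = 1)
    (hmean : Summable fun k : ℕ => (k : ℝ) * p k) (hz : z ∈ Icc 0 1) :
    1 - pgf p z ≤ (∑' k : ℕ, (k : ℝ) * p k) * (1 - z) := by
  rw [one_sub_pgf hp hps hp_one hz, ← tsum_mul_right]
  refine (summable_mul_one_sub_pow hp hps hz).tsum_le_tsum (fun k => ?_) (hmean.mul_right _)
  exact mul_one_sub_pow_le (hp k) (by linarith [hz.1]) k

theorem one_sub_pgf_lt (hp : ∀ k, 0 ≤ p k) (hps : Summable p) (hp_one : ∑' k, p k = 1)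
    (hmean : Summable fun k : ℕ => (k : ℝ) * p k) (hz : z ∈ Ico 0 1) {m : ℕ} (hm : 2 ≤ m)
    (hpm : 0 < p m) : 1 - pgf p z < (∑' k : ℕ, (k : ℝ) * p k) * (1 - z) := by
  have hz' : z ∈ Icc 0 1 := Ico_subset_Icc_self hz
  rw [one_sub_pgf hp hps hp_one hz', ← tsum_mul_right]
  refine (summable_mul_one_sub_pow hp hps hz').tsum_lt_tsum (i := m) (fun k => ?_) ?_
    (hmean.mul_right _)
  · exact mul_one_sub_pow_le (hp k) (by linarith [hz.1]) k
  · rw [mul_comm _ (p m), mul_assoc]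
    exact mul_lt_mul_of_pos_left (one_sub_pow_lt_mul_one_sub hz.1 hz.2 hm) hpm

theorem lt_pgf (hp : ∀ k, 0 ≤ p k) (hps : Summable p) (hp_one : ∑' k, p k = 1)
    (hmean_summable : Summable fun k : ℕ => (k : ℝ) * p k) (hmean : ∑' k : ℕ, (k : ℝ) * p k ≤ 1)
    (hp1 : p 1 < 1) (hz : z ∈ Ico 0 1) : z < pgf p z := by
  have hz₁ : 0 < 1 - z := sub_pos.2 hz.2
  suffices 1 - pgf p z < 1 - z by linarith
  by_cases h : ∃ m, 2 ≤ m ∧ 0 < p m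
  · obtain ⟨m, hm, hpm⟩ := h
    calc 1 - pgf p z < (∑' k : ℕ, (k : ℝ) * p k) * (1 - z) :=
          one_sub_pgf_lt hp hps hp_one hmean_summable hz hm hpm
      _ ≤ 1 - z := mul_le_of_le_one_left hz₁.le hmean
  · push Not at h
    have hmean_eq : ∑' k : ℕ, (k : ℝ) * p k = p 1 := by
      refine (tsum_eq_single 1 fun k hk => ?_).trans (by simp)
      rcases Nat.lt_or_ge k 2 with hk2 | hk2
      · obtain rfl : k = 0 := by omega
        simp
      · simp [(h k hk2).antisymm (hp k)]
    calc 1 - pgf p z ≤ (∑' k : ℕ, (k : ℝ) * p k) * (1 - z) :=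
          one_sub_pgf_le hp hps hp_one hmean_summable (Ico_subset_Icc_self hz)
      _ < 1 - z := hmean_eq ▸ mul_lt_of_lt_one_left hz₁ hp1

end pgf

/-- Extinction criterion: a critical or subcritical (non-degenerate) Galton–Watson process
dies out almost surely, i.e. the iterates of its generating function at `0` tend to `1`. -/
theorem galton_watson_extinction (p : ℕ → ℝ)
    (hp_nonneg : ∀ k, 0 ≤ p k) (hp_summable : Summable p) (hp_total : ∑' k : ℕ, p k = 1)
    (hmean_summable : Summable (fun k : ℕ => (k : ℝ) * p k))
    (hmean : ∑' k : ℕ, (k : ℝ) * p k ≤ 1)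
    (hp1 : p 1 < 1)
    (φ : ℝ → ℝ) (hφ : ∀ z, φ z = ∑' k : ℕ, p k * z ^ k) :
    Tendsto (fun n : ℕ => φ^[n] 0) atTop (nhds 1) := by
  obtain rfl : φ = pgf p := funext hφ
  exact tendsto_iterate_of_lt_apply (mapsTo_pgf hp_nonneg hp_summable hp_total)
    (continuousOn_pgf hp_nonneg hp_summable) (pgf_one hp_total)
    (fun z => lt_pgf hp_nonneg hp_summable hp_total hmean_summable hmean hp1)
    ⟨le_rfl, zero_le_one⟩
end
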